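/- arXiv:1907.00861 — 2 statements merged into one kernel-verified Lean document; each statement's English description precedes it below -/
import Mathlib

section
/- Let C be the binary code of a (6,4) net with parallel classes Π₁, Π₂, Π₃, Π₄, and let H = C ∩ C^⊥ be its hull. For any choice of lines λ₁ ∈ Π₁, λ₂ ∈ Π₂, λ₃ ∈ Π₃, λ₄ ∈ Π₄, the characteristic functions v^{λ₁}, v^{λ₂}, v^{λ₃}, v^{λ₄} are linearly independent over F₂ (so their span has dimension 4), and C is the sum of this span and H, i.e., C = span{v^{λ₁},…,v^{λ₄}} + H. -/
/-- A `(6,4)` net on a point type `P`: 36 points, lines of size 6 indexed by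
4 parallel classes of 6 lines each; each parallel class partitions the point set,
and two lines from different parallel classes meet in exactly one point. -/
structure Net64 (P : Type) [Fintype P] [DecidableEq P] where
  line : Fin 4 → Fin 6 → Finset P
  card_points : Fintype.card P = 36
  line_card : ∀ i j, (line i j).card = 6
  partition : ∀ (i : Fin 4) (p : P), ∃! j : Fin 6, p ∈ line i j
  meet : ∀ (i i' : Fin 4) (j j' : Fin 6), i ≠ i' → (line i j ∩ line i' j').card = 1

/-- The characteristic function `v^s` of a finite set `s`, with values in `F₂`. -/
def chi {P : Type} [DecidableEq P] (s : Finset P) : P → ZMod 2 :=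
  fun p => if p ∈ s then 1 else 0

/-- The binary code of a net: the `F₂`-span of the characteristic functions of its lines. -/
def Net64.code {P : Type} [Fintype P] [DecidableEq P] (N : Net64 P) :
    Submodule (ZMod 2) (P → ZMod 2) :=
  Submodule.span (ZMod 2) (Set.range fun x : Fin 4 × Fin 6 => chi (N.line x.1 x.2))

/-- The orthogonal complement of a subspace of `F₂^P` with respect to the standard
dot product `f · g = ∑ p, f p * g p`. -/
def dualCode {P : Type} [Fintype P] (C : Submodule (ZMod 2) (P → ZMod 2)) :
    Submodule (ZMod 2) (P → ZMod 2) where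
  carrier := {f | ∀ g ∈ C, ∑ p, f p * g p = 0}
  add_mem' := by
    intro a b ha hb g hg
    have h1 := ha g hg
    have h2 := hb g hg
    simp only [Set.mem_setOf_eq, Pi.add_apply, add_mul] at *
    rw [Finset.sum_add_distrib, h1, h2, add_zero]
  zero_mem' := by
    intro g hg
    simp
  smul_mem' := by
    intro c f hf g hg
    have h1 := hf g hg
    simp only [Set.mem_setOf_eq, Pi.smul_apply, smul_eq_mul, mul_assoc] at *
    rw [← Finset.mul_sum, h1, mul_zero]


/-! Two lines of the same parallel class meet in `0` or `6` points and lines of different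
classes in `1` point, so `v^λ · v^μ` is `0` or `1` according as `λ, μ` are parallel or not.
Hence the Gram matrix of `v^{λ₁}, …, v^{λ₄}` is `J - I`, which is invertible over `F₂` since `4`
is even; and for every line `μ ∈ Πᵢ`, the lines `μ` and `λᵢ` have the same product with every
line, so `v^μ - v^{λᵢ}` lies in the hull. -/

section DotProduct

variable {P : Type} [Fintype P]

theorem mem_dualCode_span_iff {s : Set (P → ZMod 2)} {f : P → ZMod 2} :
    f ∈ dualCode (Submodule.span (ZMod 2) s) ↔ ∀ g ∈ s, f ⬝ᵥ g = 0 := by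
  refine ⟨fun h g hg => h g (Submodule.subset_span hg), fun h g hg => ?_⟩
  change f ⬝ᵥ g = 0
  induction hg using Submodule.span_induction with
  | mem g hg => exact h g hg
  | zero => exact dotProduct_zero f
  | add g g' _ _ hg hg' => rw [dotProduct_add, hg, hg', add_zero]
  | smul c g _ hg => rw [dotProduct_smul, hg, smul_zero]

theorem chi_dotProduct_chi [DecidableEq P] (s t : Finset P) :
    chi s ⬝ᵥ chi t = ((s ∩ t).card : ZMod 2) := by
  simp only [dotProduct, chi, ite_mul, one_mul, zero_mul, ← ite_and, ← Finset.mem_inter,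
    Finset.sum_ite_mem, Finset.univ_inter, Finset.sum_const, nsmul_one]

theorem linearIndependent_of_dotProduct_eq_ite {R ι : Type*} [CommRing R] [CharP R 2]
    [Fintype ι] [DecidableEq ι] (hι : Even (Fintype.card ι)) (v : ι → P → R)
    (hv : ∀ i k, v i ⬝ᵥ v k = if i = k then 0 else 1) : LinearIndependent R v := by
  rw [Fintype.linearIndependent_iff]
  intro g hg
  set S := ∑ i, g i
  have hgS : ∀ k, g k = S := fun k => by
    have h := congrArg (· ⬝ᵥ v k) hg
    simp only [sum_dotProduct, smul_dotProduct, hv, smul_eq_mul, mul_ite, mul_zero, mul_one,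
      zero_dotProduct] at h
    rw [Finset.sum_ite, Finset.sum_const_zero, zero_add, Finset.filter_ne',
      Finset.sum_erase_eq_sub (Finset.mem_univ k)] at h
    exact (sub_eq_zero.1 h).symm
  have hS : S = 0 := calc
    S = ∑ _k : ι, S := Finset.sum_congr rfl fun k _ => hgS k
    _ = (Fintype.card ι : R) * S := by rw [Finset.sum_const, Finset.card_univ, nsmul_eq_mul]
    _ = 0 := by rw [(CharP.cast_eq_zero_iff R 2 _).2 (even_iff_two_dvd.1 hι), zero_mul]
  exact fun k => (hgS k).trans hS

end DotProduct

namespace Net64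

variable {P : Type} [Fintype P] [DecidableEq P] (N : Net64 P)

theorem disjoint_line (i : Fin 4) {a b : Fin 6} (hab : a ≠ b) :
    Disjoint (N.line i a) (N.line i b) :=
  Finset.disjoint_left.2 fun _ ha hb =>
    hab ((N.partition i _).unique ha hb)

theorem chi_line_dotProduct_chi_line (i i' : Fin 4) (a b : Fin 6) :
    chi (N.line i a) ⬝ᵥ chi (N.line i' b) = if i = i' then 0 else 1 := by
  rw [chi_dotProduct_chi]
  split_ifs with hi
  · subst hi
    obtain rfl | hab := eq_or_ne a b
    · rw [Finset.inter_self, N.line_card]; decide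
    · rw [Finset.disjoint_iff_inter_eq_empty.1 (N.disjoint_line i hab), Finset.card_empty,
        Nat.cast_zero]
  · rw [N.meet i i' a b hi, Nat.cast_one]

theorem chi_line_mem_code (i : Fin 4) (a : Fin 6) : chi (N.line i a) ∈ N.code :=
  Submodule.subset_span ⟨(i, a), rfl⟩

theorem chi_line_sub_chi_line_mem_hull (i : Fin 4) (a b : Fin 6) :
    chi (N.line i a) - chi (N.line i b) ∈ N.code ⊓ dualCode N.code := by
  refine ⟨sub_mem (N.chi_line_mem_code i a) (N.chi_line_mem_code i b),
    mem_dualCode_span_iff.2 ?_⟩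
  rintro _ ⟨⟨i', c⟩, rfl⟩
  rw [sub_dotProduct, chi_line_dotProduct_chi_line, chi_line_dotProduct_chi_line, sub_self]

end Net64

/-- For any choice of one line `λᵢ` from each parallel class `Πᵢ` of a `(6,4)` net,
the characteristic functions `v^{λ₁}, …, v^{λ₄}` are linearly independent over `F₂`
(so their span has dimension 4), and the code `C` is the sum of their span and the
hull `H = C ⊓ C^⊥`. -/
theorem net64_code_eq_span_sup_hull {P : Type} [Fintype P] [DecidableEq P] (N : Net64 P)
    (j : Fin 4 → Fin 6) :
    LinearIndependent (ZMod 2) (fun i : Fin 4 => chi (N.line i (j i))) ∧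
    Module.finrank (ZMod 2)
      (Submodule.span (ZMod 2) (Set.range fun i : Fin 4 => chi (N.line i (j i)))) = 4 ∧
    N.code = Submodule.span (ZMod 2) (Set.range fun i : Fin 4 => chi (N.line i (j i)))
      ⊔ (N.code ⊓ dualCode N.code) := by
  have hli : LinearIndependent (ZMod 2) (fun i : Fin 4 => chi (N.line i (j i))) :=
    linearIndependent_of_dotProduct_eq_ite (by decide) _
      fun i k => N.chi_line_dotProduct_chi_line i k (j i) (j k)
  refine ⟨hli, by rw [finrank_span_eq_card hli, Fintype.card_fin], le_antisymm ?_ ?_⟩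
  · refine Submodule.span_le.2 ?_
    rintro _ ⟨⟨i, a⟩, rfl⟩
    change chi (N.line i a) ∈ _
    rw [← add_sub_cancel (chi (N.line i (j i))) (chi (N.line i a))]
    exact add_mem (Submodule.mem_sup_left (Submodule.subset_span ⟨i, rfl⟩))
      (Submodule.mem_sup_right (N.chi_line_sub_chi_line_mem_hull i a (j i)))
  · refine sup_le (Submodule.span_le.2 ?_) inf_le_left
    rintro _ ⟨i, rfl⟩
    exact N.chi_line_mem_code i (j i)
end

section
/- In a (6,4) net, if M is a set of lines with parallax (3,3,3,1) (up to permutation of the parallel classes), then the Hamming weight of c(M) is divisible by 4; in particular wt(c(M)) ≠ 6. -/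
/-- `c(Λ)`: the `F₂`-sum of the characteristic functions of a set of lines of the net,
a set of lines being given by the finite set of its (class, index) pairs. -/
def Net64.cSum {P : Type} [Fintype P] [DecidableEq P] (N : Net64 P)
    (Λ : Finset (Fin 4 × Fin 6)) : P → ZMod 2 :=
  ∑ x ∈ Λ, chi (N.line x.1 x.2)

/-- `lᵢ = |Λ ∩ Πᵢ|`: the number of lines of `Λ` in the `i`-th parallel class. -/
def lcount (Λ : Finset (Fin 4 × Fin 6)) (i : Fin 4) : ℕ :=
  (Λ.filter fun x => x.1 = i).card

/-- `pⱼ`: the number of points of the net lying on exactly `j` lines of `Λ`. -/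
def Net64.pcount {P : Type} [Fintype P] [DecidableEq P] (N : Net64 P)
    (Λ : Finset (Fin 4 × Fin 6)) (j : ℕ) : ℕ :=
  (Finset.univ.filter fun p : P => (Λ.filter fun x => p ∈ N.line x.1 x.2).card = j).card

/-- The Hamming weight of `f ∈ F₂^P`: the number of points where `f` is nonzero. -/
def wt {P : Type} [Fintype P] (f : P → ZMod 2) : ℕ :=
  (Finset.univ.filter fun p => f p ≠ 0).card

open Finset

theorem ite_odd_modEq_sq (n : ℕ) : (if Odd n then 1 else 0) ≡ n ^ 2 [MOD 4] := by
  rcases Nat.even_or_odd' n with ⟨k, rfl | rfl⟩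
  · rw [if_neg (by simp [parity_simps]), Nat.ModEq, Nat.zero_mod, pow_two,
      show 2 * k * (2 * k) = 4 * (k * k) by ring, Nat.mul_mod_right]
  · rw [if_pos (by simp [parity_simps]), Nat.ModEq,
      show (2 * k + 1) ^ 2 = 4 * (k * k + k) + 1 by ring, Nat.mul_add_mod]

theorem Finset.card_filter_odd_modEq_sum_sq {α : Type*} (s : Finset α) (f : α → ℕ) :
    #{a ∈ s | Odd (f a)} ≡ ∑ a ∈ s, f a ^ 2 [MOD 4] := by
  rw [card_filter]
  exact Nat.ModEq.sum fun a _ => ite_odd_modEq_sq (f a)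

theorem Finset.sum_sq_card_filter_mem {α β : Type*} [Fintype α] [DecidableEq α] (s : Finset β)
    (A : β → Finset α) :
    ∑ p, #{b ∈ s | p ∈ A b} ^ 2 = ∑ b ∈ s, ∑ b' ∈ s, #(A b ∩ A b') := by
  simp_rw [card_filter, sq, sum_mul_sum, ite_zero_mul_ite_zero, mul_one,
    ← mem_inter]
  rw [sum_comm]
  refine sum_congr rfl fun b _ => ?_
  rw [sum_comm]
  refine sum_congr rfl fun b' _ => ?_
  rw [← card_filter, filter_mem_eq_inter, univ_inter]

theorem card_eq_sum_lcount (M : Finset (Fin 4 × Fin 6)) : #M = ∑ i, lcount M i :=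
  card_eq_sum_card_fiberwise fun _ _ => mem_univ _

theorem sum_lcount_fst (M : Finset (Fin 4 × Fin 6)) :
    ∑ x ∈ M, lcount M x.1 = ∑ i, lcount M i ^ 2 := by
  rw [← sum_fiberwise' M Prod.fst fun i => lcount M i]
  refine sum_congr rfl fun i _ => ?_
  rw [sum_const, smul_eq_mul, sq]
  rfl

namespace Net64

variable {P : Type} [Fintype P] [DecidableEq P] (N : Net64 P)

def degree (M : Finset (Fin 4 × Fin 6)) (p : P) : ℕ :=
  #{x ∈ M | p ∈ N.line x.1 x.2}

theorem cSum_apply (M : Finset (Fin 4 × Fin 6)) (p : P) :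
    N.cSum M p = (N.degree M p : ZMod 2) := by
  simp only [cSum, chi, Finset.sum_apply, degree, sum_boole]

theorem wt_cSum (M : Finset (Fin 4 × Fin 6)) : wt (N.cSum M) = #{p | Odd (N.degree M p)} := by
  simp only [wt, cSum_apply, ZMod.natCast_ne_zero_iff_odd]

theorem disjoint_line_s11 (i : Fin 4) {j j' : Fin 6} (h : j ≠ j') :
    Disjoint (N.line i j) (N.line i j') := by
  refine disjoint_left.mpr fun p hj hj' => h ?_
  obtain ⟨_, _, huniq⟩ := N.partition i p
  exact (huniq j hj).trans (huniq j' hj').symm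

theorem card_inter_line (x y : Fin 4 × Fin 6) :
    #(N.line x.1 x.2 ∩ N.line y.1 y.2) = if x = y then 6 else if x.1 = y.1 then 0 else 1 := by
  obtain ⟨i, j⟩ := x
  obtain ⟨i', j'⟩ := y
  by_cases hi : i = i'
  · subst hi
    by_cases hj : j = j'
    · simp [hj, N.line_card]
    · simp [hj, disjoint_iff_inter_eq_empty.mp (N.disjoint_line_s11 i hj)]
  · simp [hi, N.meet i i' j j' hi]

theorem sum_card_inter_line_add_lcount (M : Finset (Fin 4 × Fin 6)) {x : Fin 4 × Fin 6}
    (hx : x ∈ M) : ∑ y ∈ M, #(N.line x.1 x.2 ∩ N.line y.1 y.2) + lcount M x.1 = 6 + #M := by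
  have hsplit : ∀ y, #(N.line x.1 x.2 ∩ N.line y.1 y.2)
      = (if x = y then 6 else 0) + if y.1 ≠ x.1 then 1 else 0 := by
    intro y
    rw [N.card_inter_line]
    split_ifs <;> simp_all
  rw [sum_congr rfl fun y _ => hsplit y, sum_add_distrib, sum_ite_eq,
    if_pos hx, ← card_filter, add_assoc, lcount, add_comm (#_),
    card_filter_add_card_filter_not]

theorem sum_degree_sq_add_sum_lcount_sq (M : Finset (Fin 4 × Fin 6)) :
    ∑ p, N.degree M p ^ 2 + ∑ i, lcount M i ^ 2 = #M * (6 + #M) := by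
  unfold degree
  rw [sum_sq_card_filter_mem, ← sum_lcount_fst, ← sum_add_distrib,
    sum_congr rfl fun x hx => N.sum_card_inter_line_add_lcount M hx, sum_const,
    smul_eq_mul]

end Net64

/-- If `M` is a set of lines of a `(6,4)` net with parallax `(3,3,3,1)` up to permutation
of the parallel classes, then `wt(c(M))` is divisible by 4; in particular it is not 6. -/
theorem net64_parallax_3331 {P : Type} [Fintype P] [DecidableEq P] (N : Net64 P)
    (M : Finset (Fin 4 × Fin 6)) (σ : Equiv.Perm (Fin 4))
    (h : (lcount M (σ 0), lcount M (σ 1), lcount M (σ 2), lcount M (σ 3)) = (3, 3, 3, 1)) :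
    4 ∣ wt (N.cSum M) ∧ wt (N.cSum M) ≠ 6 := by
  simp only [Prod.mk.injEq] at h
  obtain ⟨h0, h1, h2, h3⟩ := h
  have hcard : #M = 10 := by
    rw [card_eq_sum_lcount, ← Equiv.sum_comp σ, Fin.sum_univ_four, h0, h1, h2, h3]
  have hsq : ∑ i, lcount M i ^ 2 = 28 := by
    rw [← Equiv.sum_comp σ, Fin.sum_univ_four, h0, h1, h2, h3]
    rfl
  have hdegree : ∑ p, N.degree M p ^ 2 = 132 := by
    have := N.sum_degree_sq_add_sum_lcount_sq M
    rw [hcard, hsq] at this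
    omega
  have hwt : wt (N.cSum M) ≡ 0 [MOD 4] := by
    rw [N.wt_cSum]
    exact (card_filter_odd_modEq_sum_sq _ _).trans (by rw [hdegree]; rfl)
  have h4 : 4 ∣ wt (N.cSum M) := Nat.modEq_zero_iff_dvd.mp hwt
  exact ⟨h4, fun h6 => by omega⟩
end
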